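/- arXiv:math/0305438 — 3 statements merged into one kernel-verified Lean document; each statement's English description precedes it below -/
import Mathlib

section
/- Let I ⊆ ℝ be an interval and let X : I → L²(Ω) be a family of square-integrable real random variables on a probability space (Ω, F, P) whose covariance factorizes as Cov(X(s), X(t)) = h₁(s)h₂(t) for all s, t ∈ I with s ≤ t, where h₁, h₂ : I → ℝ satisfy h₁(t)h₂(t) > 0 for all t ∈ I. Then the function r(t) := h₁(t)/h₂(t) is monotonically non-decreasing on I, i.e. s ≤ t implies h₁(s)/h₂(s) ≤ h₁(t)/h₂(t). -/
open MeasureTheory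

/-- Cauchy–Schwarz for integrals of products of L² functions. -/
lemma sq_integral_mul_le_aux {Ω : Type*} [MeasureSpace Ω] {f g : Ω → ℝ}
    (hf : MemLp f 2 (volume : Measure Ω)) (hg : MemLp g 2 (volume : Measure Ω)) :
    (∫ ω, f ω * g ω) * (∫ ω, f ω * g ω) ≤ (∫ ω, f ω * f ω) * (∫ ω, g ω * g ω) := by
  set F : Lp ℝ 2 (volume : Measure Ω) := hf.toLp f
  set G : Lp ℝ 2 (volume : Measure Ω) := hg.toLp g
  have hFf : ∀ᵐ ω ∂(volume : Measure Ω), F ω = f ω := hf.coeFn_toLp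
  have hGg : ∀ᵐ ω ∂(volume : Measure Ω), G ω = g ω := hg.coeFn_toLp
  have hFG : (inner ℝ F G : ℝ) = ∫ ω, f ω * g ω := by
    rw [L2.inner_def]
    refine integral_congr_ae ?_
    filter_upwards [hFf, hGg] with ω h1 h2
    simp [h1, h2, RCLike.inner_apply, mul_comm]
  have hFF : (inner ℝ F F : ℝ) = ∫ ω, f ω * f ω := by
    rw [L2.inner_def]
    refine integral_congr_ae ?_
    filter_upwards [hFf] with ω h1
    simp [h1, RCLike.inner_apply, sq]
  have hGG : (inner ℝ G G : ℝ) = ∫ ω, g ω * g ω := by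
    rw [L2.inner_def]
    refine integral_congr_ae ?_
    filter_upwards [hGg] with ω h2
    simp [h2, RCLike.inner_apply, sq]
  have := real_inner_mul_inner_self_le F G
  rwa [hFG, hFF, hGG] at this

/-- The covariance of two real random variables:
`Cov(X,Y) = E[(X - E[X]) * (Y - E[Y])]`. -/
noncomputable def cov {Ω : Type*} [MeasureSpace Ω] (X Y : Ω → ℝ) : ℝ :=
  ∫ ω, (X ω - ∫ ω', X ω') * (Y ω - ∫ ω', Y ω')

/-- If a family of square-integrable random variables indexed by an interval `I` has covariance
factorizing as `Cov(X s, X t) = h₁ s * h₂ t` for `s ≤ t` in `I`, with `h₁ t * h₂ t > 0` on `I`,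
then `r = h₁ / h₂` is monotonically non-decreasing on `I`. -/
theorem ratio_monotone_of_cov_factorization
    {Ω : Type*} [MeasureSpace Ω] [IsProbabilityMeasure (volume : Measure Ω)]
    (I : Set ℝ) (hI : I.OrdConnected)
    (X : ℝ → Ω → ℝ) (hX : ∀ t ∈ I, MemLp (X t) 2 (volume : Measure Ω))
    (h₁ h₂ : ℝ → ℝ) (hpos : ∀ t ∈ I, 0 < h₁ t * h₂ t)
    (hcov : ∀ s ∈ I, ∀ t ∈ I, s ≤ t → cov (X s) (X t) = h₁ s * h₂ t) :
    ∀ s ∈ I, ∀ t ∈ I, s ≤ t → h₁ s / h₂ s ≤ h₁ t / h₂ t := by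
  intro s hs t ht hst
  have hfs : MemLp (fun ω => X s ω - ∫ ω', X s ω') 2 (volume : Measure Ω) :=
    (hX s hs).sub (memLp_const _)
  have hft : MemLp (fun ω => X t ω - ∫ ω', X t ω') 2 (volume : Measure Ω) :=
    (hX t ht).sub (memLp_const _)
  have key : cov (X s) (X t) * cov (X s) (X t) ≤ cov (X s) (X s) * cov (X t) (X t) :=
    sq_integral_mul_le_aux hfs hft
  rw [hcov s hs t ht hst, hcov s hs s hs le_rfl, hcov t ht t ht le_rfl] at key
  have hps := hpos s hs
  have hpt := hpos t ht
  have h2s : h₂ s ≠ 0 := fun h => by simp [h] at hps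
  have h2t : h₂ t ≠ 0 := fun h => by simp [h] at hpt
  have e1 : h₁ s / h₂ s = (h₁ s * h₂ s) / (h₂ s * h₂ s) := by
    rw [mul_div_mul_right _ _ h2s]
  have e2 : h₁ t / h₂ t = (h₁ t * h₂ t) / (h₂ t * h₂ t) := by
    rw [mul_div_mul_right _ _ h2t]
  rw [e1, e2, div_le_div_iff₀ (mul_self_pos.2 h2s) (mul_self_pos.2 h2t)]
  nlinarith [mul_le_mul_of_nonneg_right key (mul_self_nonneg (h₂ s)), hps, hpt,
    mul_pos hps hpt, mul_self_nonneg (h₂ t)]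
end

section
/- Let I ⊆ ℝ be an interval and let c : I × I → ℝ be continuous with c(s,t) > 0 for all s, t ∈ I with s ≤ t, satisfying the Markov covariance functional equation c(s,u)·c(t,t) = c(s,t)·c(t,u) for all s, t, u ∈ I with s ≤ t ≤ u. Then there exist functions h₁, h₂ : I → ℝ with h₁(t)h₂(t) > 0 for all t ∈ I such that c(s,t) = h₁(s)h₂(t) for all s, t ∈ I with s ≤ t. -/
/-- A continuous positive solution `c` of the Markov covariance functional equation
`c s u * c t t = c s t * c t u` (for `s ≤ t ≤ u` in an interval `I`) factorizes as
`c s t = h₁ s * h₂ t` for `s ≤ t`, where `h₁ t * h₂ t > 0` on `I`. -/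
theorem cov_factorization_of_markov_eq
    (I : Set ℝ) (hI : I.OrdConnected)
    (c : ℝ → ℝ → ℝ)
    (hcont : ContinuousOn (fun p : ℝ × ℝ => c p.1 p.2) (I ×ˢ I))
    (hpos : ∀ s ∈ I, ∀ t ∈ I, s ≤ t → 0 < c s t)
    (heq : ∀ s ∈ I, ∀ t ∈ I, ∀ u ∈ I, s ≤ t → t ≤ u →
      c s u * c t t = c s t * c t u) :
    ∃ h₁ h₂ : ℝ → ℝ, (∀ t ∈ I, 0 < h₁ t * h₂ t) ∧
      ∀ s ∈ I, ∀ t ∈ I, s ≤ t → c s t = h₁ s * h₂ t := by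
  rcases Set.eq_empty_or_nonempty I with hE | ⟨t₀, ht₀⟩
  · exact ⟨fun _ => 1, fun _ => 1, by simp [hE], by simp [hE]⟩
  refine ⟨fun t => if t ≤ t₀ then c t t₀ else c t t * c t₀ t₀ / c t₀ t,
          fun t => if t ≤ t₀ then c t t / c t t₀ else c t₀ t / c t₀ t₀, ?_, ?_⟩
  · intro t ht
    by_cases h : t ≤ t₀ <;> simp only [h, if_true, if_false]
    · have h1 := hpos t ht t₀ ht₀ h
      have h2 := hpos t ht t ht le_rfl
      positivity
    · have h1 := hpos t₀ ht₀ t ht (le_of_not_ge h)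
      have h2 := hpos t ht t ht le_rfl
      have h3 := hpos t₀ ht₀ t₀ ht₀ le_rfl
      positivity
  · intro s hs t ht hst
    by_cases hts : t ≤ t₀
    · have hst₀ : s ≤ t₀ := hst.trans hts
      simp only [hts, hst₀, if_true]
      have key := heq s hs t ht t₀ ht₀ hst hts
      have h1 := (hpos t ht t₀ ht₀ hts).ne'
      field_simp
      linarith
    · by_cases hss : s ≤ t₀
      · simp only [hts, hss, if_true, if_false]
        have key := heq s hs t₀ ht₀ t ht hss (le_of_not_ge hts)
        have h1 := (hpos t₀ ht₀ t₀ ht₀ le_rfl).ne'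
        field_simp
        linarith
      · simp only [hts, hss, if_false]
        have hs₀ : t₀ ≤ s := le_of_not_ge hss
        have key := heq t₀ ht₀ s hs t ht hs₀ hst
        have h1 := (hpos t₀ ht₀ s hs hs₀).ne'
        have h2 := (hpos t₀ ht₀ t₀ ht₀ le_rfl).ne'
        field_simp
        nlinarith [hpos t₀ ht₀ t₀ ht₀ le_rfl]
end

section
/- Let I ⊆ ℝ be an open interval, t₀ ∈ I, x₀ ∈ ℝ, and let m, h₁, h₂ : I → ℝ be continuously differentiable with h₂(t) ≠ 0 for all t ∈ I. Define M(t) := m(t) + (h₂(t)/h₂(t₀))·(x₀ − m(t₀)) and V(t) := h₂(t)·[h₁(t) − (h₂(t)/h₂(t₀))·h₁(t₀)], and assume V(t) > 0 for all t ∈ I with t > t₀. Define f(x,t) := (2πV(t))^{-1/2}·exp(−(x − M(t))²/(2V(t))) for t > t₀, A₁(x,t) := m′(t) + (x − m(t))·h₂′(t)/h₂(t), and A₂(t) := h₂(t)²·r′(t) where r(t) = h₁(t)/h₂(t). Then f satisfies the Fokker–Planck equation ∂f/∂t (x,t) = −∂/∂x [A₁(x,t)·f(x,t)] + (1/2)·A₂(t)·∂²f/∂x²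 (x,t) for all x ∈ ℝ and t ∈ I with t > t₀. -/
/-!
Write `g_{μ,v}` for the Gaussian density with mean `μ` and variance `v`. Differentiating in the
parameters gives `∂_μ g = -∂_x g` and `∂_v g = ½ ∂²_x g`, and moreover
`∂_x ((x - μ) g) + v ∂²_x g = 0`. Hence `g_{μ(t),v(t)}` solves the Fokker–Planck equation
with linear drift `α + β x` and diffusion coefficient `σ²` as soon as the moment equations
`μ' = α + β μ`, `v' = 2 β v + σ²` hold. For a Gauss–Markov process they hold with
`β = h₂'/h₂`, `α = m' - β m` and `σ² = h₁' h₂ - h₁ h₂' = h₂² (h₁/h₂)'`.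
-/

open Real

noncomputable def gaussianDensity (μ v x : ℝ) : ℝ :=
  (2 * π * v) ^ (-(1 : ℝ) / 2) * exp (-(x - μ) ^ 2 / (2 * v))

theorem hasDerivAt_gaussianDensity (μ v x : ℝ) :
    HasDerivAt (gaussianDensity μ v) (-((x - μ) / v) * gaussianDensity μ v x) x := by
  have hexponent : HasDerivAt (fun y => -(y - μ) ^ 2 / (2 * v)) (-((x - μ) / v)) x := by
    refine ((((hasDerivAt_id' x).sub_const μ).fun_pow 2).fun_neg.div_const (2 * v)).congr_deriv ?_
    ring
  refine (hexponent.exp.const_mul ((2 * π * v) ^ (-(1 : ℝ) / 2))).congr_deriv ?_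
  unfold gaussianDensity
  ring

theorem deriv_gaussianDensity (μ v : ℝ) :
    deriv (gaussianDensity μ v) = fun x => -((x - μ) / v) * gaussianDensity μ v x :=
  funext fun x => (hasDerivAt_gaussianDensity μ v x).deriv

theorem hasDerivAt_deriv_gaussianDensity (μ v x : ℝ) :
    HasDerivAt (deriv (gaussianDensity μ v))
      (((x - μ) ^ 2 / v ^ 2 - 1 / v) * gaussianDensity μ v x) x := by
  rw [deriv_gaussianDensity]
  refine ((((hasDerivAt_id' x).sub_const μ).div_const v).fun_neg.fun_mul
    (hasDerivAt_gaussianDensity μ v x)).congr_deriv ?_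
  ring

theorem hasDerivAt_gaussianDensity_comp {μ v : ℝ → ℝ} {μ' v' t : ℝ} (x : ℝ)
    (hμ : HasDerivAt μ μ' t) (hv : HasDerivAt v v' t) (hvpos : 0 < v t) :
    HasDerivAt (fun τ => gaussianDensity (μ τ) (v τ) x)
      ((μ' * ((x - μ t) / v t) + v' / 2 * ((x - μ t) ^ 2 / v t ^ 2 - 1 / v t)) *
        gaussianDensity (μ t) (v t) x) t := by
  have hpos : 0 < 2 * π * v t := by positivity
  have hnormalizer : HasDerivAt (fun τ => (2 * π * v τ) ^ (-(1 : ℝ) / 2))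
      (-(v' / (2 * v t)) * (2 * π * v t) ^ (-(1 : ℝ) / 2)) t := by
    refine ((hv.const_mul (2 * π)).rpow_const (p := -(1 : ℝ) / 2)
      (Or.inl hpos.ne')).congr_deriv ?_
    rw [Real.rpow_sub hpos, Real.rpow_one]
    field_simp
  have hexponent : HasDerivAt (fun τ => -(x - μ τ) ^ 2 / (2 * v τ))
      (μ' * ((x - μ t) / v t) + v' * (x - μ t) ^ 2 / (2 * v t ^ 2)) t := by
    refine ((((hasDerivAt_const t x).fun_sub hμ).fun_pow 2).fun_neg.fun_div (hv.const_mul 2)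
      (by positivity)).congr_deriv ?_
    field_simp
    ring
  refine (hnormalizer.fun_mul hexponent.exp).congr_deriv ?_
  unfold gaussianDensity
  field_simp
  ring

theorem gaussianDensity_fokkerPlanck {μ v : ℝ → ℝ} {α β σsq t : ℝ}
    (hμ : HasDerivAt μ (α + β * μ t) t) (hv : HasDerivAt v (2 * β * v t + σsq) t)
    (hvpos : 0 < v t) (x : ℝ) :
    deriv (fun τ => gaussianDensity (μ τ) (v τ) x) t =
      - deriv (fun y => (α + β * y) * gaussianDensity (μ t) (v t) y) x
        + (1 / 2) * σsq * deriv (fun y => deriv (gaussianDensity (μ t) (v t)) y) x := by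
  have hdrift : HasDerivAt (fun y => α + β * y) β x := by
    simpa using ((hasDerivAt_id' x).const_mul β).const_add α
  rw [(hasDerivAt_gaussianDensity_comp x hμ hv hvpos).deriv,
    (hdrift.fun_mul (hasDerivAt_gaussianDensity _ _ x)).deriv,
    (hasDerivAt_deriv_gaussianDensity _ _ x).deriv]
  field_simp
  ring

section GaussMarkov

variable {m h₁ h₂ : ℝ → ℝ} {m' h₁' h₂' t : ℝ}

theorem hasDerivAt_gaussMarkov_mean {M : ℝ → ℝ} {a b : ℝ}
    (hM : ∀ s, M s = m s + h₂ s / a * b) (hm : HasDerivAt m m' t)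
    (hh₂ : HasDerivAt h₂ h₂' t) (hne : h₂ t ≠ 0) :
    HasDerivAt M ((m' - h₂' / h₂ t * m t) + h₂' / h₂ t * M t) t := by
  rw [funext hM]
  refine (hm.fun_add ((hh₂.div_const a).mul_const b)).congr_deriv ?_
  field_simp
  ring

theorem hasDerivAt_gaussMarkov_variance {V : ℝ → ℝ} {a b : ℝ}
    (hV : ∀ s, V s = h₂ s * (h₁ s - h₂ s / a * b)) (hh₁ : HasDerivAt h₁ h₁' t)
    (hh₂ : HasDerivAt h₂ h₂' t) (hne : h₂ t ≠ 0) :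
    HasDerivAt V (2 * (h₂' / h₂ t) * V t + (h₁' * h₂ t - h₁ t * h₂')) t := by
  rw [funext hV]
  refine (hh₂.fun_mul (hh₁.fun_sub ((hh₂.div_const a).mul_const b))).congr_deriv ?_
  field_simp
  ring

theorem sq_mul_deriv_div (hh₁ : HasDerivAt h₁ h₁' t) (hh₂ : HasDerivAt h₂ h₂' t)
    (hne : h₂ t ≠ 0) :
    h₂ t ^ 2 * deriv (fun s => h₁ s / h₂ s) t = h₁' * h₂ t - h₁ t * h₂' := by
  rw [(hh₁.fun_div hh₂ hne).deriv]
  field_simp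

end GaussMarkov

theorem fokkerPlanck_of_gaussMarkov_transition_density_general
    (I : Set ℝ)
    (t₀ : ℝ) (x₀ : ℝ)
    (m h₁ h₂ m' h₁' h₂' : ℝ → ℝ)
    (hm : ∀ t ∈ I, HasDerivAt m (m' t) t)
    (hh₁ : ∀ t ∈ I, HasDerivAt h₁ (h₁' t) t)
    (hh₂ : ∀ t ∈ I, HasDerivAt h₂ (h₂' t) t)
    (hne : ∀ t ∈ I, h₂ t ≠ 0)
    (M V : ℝ → ℝ)
    (hM : ∀ t : ℝ, M t = m t + (h₂ t / h₂ t₀) * (x₀ - m t₀))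
    (hV : ∀ t : ℝ, V t = h₂ t * (h₁ t - (h₂ t / h₂ t₀) * h₁ t₀))
    (hVpos : ∀ t ∈ I, t₀ < t → 0 < V t)
    (f : ℝ → ℝ → ℝ)
    (hf : ∀ x t : ℝ, f x t =
      (2 * π * V t) ^ (-(1 : ℝ) / 2) * Real.exp (-(x - M t) ^ 2 / (2 * V t)))
    (A₁ : ℝ → ℝ → ℝ)
    (hA₁ : ∀ x t : ℝ, A₁ x t = m' t + (x - m t) * (h₂' t / h₂ t))
    (A₂ : ℝ → ℝ)
    (hA₂ : ∀ t : ℝ, A₂ t = (h₂ t) ^ 2 * deriv (fun s => h₁ s / h₂ s) t) :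
    ∀ x : ℝ, ∀ t ∈ I, t₀ < t →
      deriv (fun τ => f x τ) t =
        - deriv (fun y => A₁ y t * f y t) x
          + (1 / 2) * A₂ t * deriv (fun y => deriv (fun z => f z t) y) x := by
  intro x t ht ht₀t
  have hdrift : ∀ y, A₁ y t = (m' t - h₂' t / h₂ t * m t) + h₂' t / h₂ t * y := fun y => by
    rw [hA₁]
    ring
  obtain rfl : f = fun x t => gaussianDensity (M t) (V t) x := funext₂ hf
  simp only [hdrift]
  rw [hA₂, sq_mul_deriv_div (hh₁ t ht) (hh₂ t ht) (hne t ht)]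
  exact gaussianDensity_fokkerPlanck
    (hasDerivAt_gaussMarkov_mean hM (hm t ht) (hh₂ t ht) (hne t ht))
    (hasDerivAt_gaussMarkov_variance hV (hh₁ t ht) (hh₂ t ht) (hne t ht))
    (hVpos t ht ht₀t) x

/-- The Gaussian transition density `f x t` with conditional mean `M t` and variance `V t`
of a Gauss–Markov process satisfies the Fokker–Planck equation
`∂f/∂t = -∂/∂x (A₁ f) + (1/2) A₂ ∂²f/∂x²` for `t > t₀`. -/
theorem fokkerPlanck_of_gaussMarkov_transition_density
    (I : Set ℝ) (hIopen : IsOpen I) (hI : I.OrdConnected)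
    (t₀ : ℝ) (ht₀ : t₀ ∈ I) (x₀ : ℝ)
    (m h₁ h₂ m' h₁' h₂' : ℝ → ℝ)
    (hm : ∀ t ∈ I, HasDerivAt m (m' t) t) (hm' : ContinuousOn m' I)
    (hh₁ : ∀ t ∈ I, HasDerivAt h₁ (h₁' t) t) (hh₁' : ContinuousOn h₁' I)
    (hh₂ : ∀ t ∈ I, HasDerivAt h₂ (h₂' t) t) (hh₂' : ContinuousOn h₂' I)
    (hne : ∀ t ∈ I, h₂ t ≠ 0)
    (M V : ℝ → ℝ)
    (hM : ∀ t : ℝ, M t = m t + (h₂ t / h₂ t₀) * (x₀ - m t₀))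
    (hV : ∀ t : ℝ, V t = h₂ t * (h₁ t - (h₂ t / h₂ t₀) * h₁ t₀))
    (hVpos : ∀ t ∈ I, t₀ < t → 0 < V t)
    (f : ℝ → ℝ → ℝ)
    (hf : ∀ x t : ℝ, f x t =
      (2 * π * V t) ^ (-(1 : ℝ) / 2) * Real.exp (-(x - M t) ^ 2 / (2 * V t)))
    (A₁ : ℝ → ℝ → ℝ)
    (hA₁ : ∀ x t : ℝ, A₁ x t = m' t + (x - m t) * (h₂' t / h₂ t))
    (A₂ : ℝ → ℝ)
    (hA₂ : ∀ t : ℝ, A₂ t = (h₂ t) ^ 2 * deriv (fun s => h₁ s / h₂ s) t) :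
    ∀ x : ℝ, ∀ t ∈ I, t₀ < t →
      deriv (fun τ => f x τ) t =
        - deriv (fun y => A₁ y t * f y t) x
          + (1 / 2) * A₂ t * deriv (fun y => deriv (fun z => f z t) y) x :=
  fokkerPlanck_of_gaussMarkov_transition_density_general I t₀ x₀ m h₁ h₂ m' h₁' h₂' hm hh₁ hh₂ hne M
    V hM hV hVpos f hf A₁ hA₁ A₂ hA₂
end
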